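/- arXiv:2308.09696 — 2 statements merged into one kernel-verified Lean document; each statement's English description precedes it below -/
import Mathlib

section
/- If the metric dimension of the inclusion ideal graph In(R) of a commutative ring R (which is not a field) is finite, then R has only finitely many nontrivial ideals. -/
open SimpleGraph Finset

variable {V : Type*}

/-- A set of vertices is resolving if distance vectors to it distinguish vertices. -/
def IsResolving (G : SimpleGraph V) (S : Set V) : Prop :=
  ∀ u v : V, (∀ w ∈ S, G.dist u w = G.dist v w) → u = v

/-- The metric dimension: the least size of a (finite) resolving set. -/
noncomputable def metricDim (G : SimpleGraph V) : ℕ :=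
  sInf {k | ∃ S : Finset V, S.card = k ∧ IsResolving G ↑S}

/-- Two vertices are mutually maximally distant. -/
def MMD (G : SimpleGraph V) (u v : V) : Prop :=
  u ≠ v ∧ (∀ w, G.Adj u w → G.dist v w ≤ G.dist u v) ∧
    (∀ w, G.Adj v w → G.dist u w ≤ G.dist u v)

/-- The strong resolving graph: edges between mutually maximally distant vertices. -/
def strongResolvingGraph (G : SimpleGraph V) : SimpleGraph V where
  Adj u v := MMD G u v
  symm := by
    refine ⟨?_⟩
    rintro u v ⟨hne, h1, h2⟩
    refine ⟨hne.symm, ?_, ?_⟩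
    · intro w hw
      rw [SimpleGraph.dist_comm (u := v) (v := u)]
      exact h2 w hw
    · intro w hw
      rw [SimpleGraph.dist_comm (u := v) (v := u)]
      exact h1 w hw
  loopless := ⟨fun v h => h.1 rfl⟩

/-- A set strongly resolving a graph. -/
def IsStrongResolving (G : SimpleGraph V) (S : Set V) : Prop :=
  ∀ u v : V, u ≠ v → ∃ w ∈ S,
    G.dist w u = G.dist w v + G.dist v u ∨ G.dist w v = G.dist w u + G.dist u v

/-- Strong metric dimension. -/
noncomputable def sdim (G : SimpleGraph V) : ℕ :=
  sInf {k | ∃ S : Finset V, S.card = k ∧ IsStrongResolving G ↑S}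

/-- An independent set of vertices. -/
def IsIndepFinset (G : SimpleGraph V) (S : Finset V) : Prop :=
  ∀ u ∈ S, ∀ v ∈ S, u ≠ v → ¬ G.Adj u v

/-- Independence number. -/
noncomputable def indepNum (G : SimpleGraph V) : ℕ :=
  sSup {k | ∃ S : Finset V, S.card = k ∧ IsIndepFinset G S}

/-- Vertices of the inclusion graph on `{1,...,n}`: nonempty proper subsets. -/
def SubVert (n : ℕ) := {A : Finset (Fin n) // A.Nonempty ∧ A ≠ Finset.univ}

/-- The inclusion graph on nonempty proper subsets of `{1,...,n}`. -/
def inclGraph (n : ℕ) : SimpleGraph (SubVert n) where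
  Adj A B := A.1 ⊂ B.1 ∨ B.1 ⊂ A.1
  symm := ⟨fun _ _ h => h.symm⟩
  loopless := ⟨fun A h => by
    rcases h with h | h <;> exact (ssubset_irrefl A.1) h⟩

/-- Complement of a vertex of the inclusion graph. -/
def complVert {n : ℕ} (A : SubVert n) : SubVert n :=
  ⟨A.1ᶜ,
    Finset.nonempty_iff_ne_empty.mpr fun h => A.2.2 (by simpa using h),
    fun h => (Finset.nonempty_iff_ne_empty.mp A.2.1) (by simpa using h)⟩

/-- Vertices of the inclusion ideal graph of a product of chain rings:
tuples in a product of chains, excluding bottom and top. -/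
def ChainVert {m : ℕ} (d : Fin m → ℕ) := {v : ∀ i, Fin (d i + 2) // v ≠ ⊥ ∧ v ≠ ⊤}

/-- The inclusion graph on a product of chains (minus bottom and top),
modelling the inclusion ideal graph of a product of principal ideal rings. -/
def chainGraph {m : ℕ} (d : Fin m → ℕ) : SimpleGraph (ChainVert d) where
  Adj I J := I.1 < J.1 ∨ J.1 < I.1
  symm := ⟨fun _ _ h => h.symm⟩
  loopless := ⟨fun I h => by rcases h with h | h <;> exact lt_irrefl _ h⟩

/-- Vertices of the inclusion ideal graph: nontrivial ideals of `R`. -/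
def IdealVert (R : Type*) [CommRing R] := {I : Ideal R // I ≠ ⊥ ∧ I ≠ ⊤}

/-- The inclusion ideal graph of a commutative ring. -/
def inclIdealGraph (R : Type*) [CommRing R] : SimpleGraph (IdealVert R) where
  Adj I J := I.1 < J.1 ∨ J.1 < I.1
  symm := ⟨fun _ _ h => h.symm⟩
  loopless := ⟨fun I h => by rcases h with h | h <;> exact lt_irrefl _ h⟩

/-!
A finite resolving set `S` embeds the vertices into the distance vectors `S → {0, …, d}` once
all distances are bounded by `d`, so it suffices to show that `In(R)` has diameter at most `3`.
Incomparable ideals `I`, `J` are joined through `I ⊓ J` or `I ⊔ J` unless `I` and `J` are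
complements. In that case a neighbour `W` of `I` exists by connectedness, and modularity of the
ideal lattice makes `W ⊔ J` (if `W < I`) resp. `W ⊓ J` (if `I < W`) a nontrivial ideal, giving a
path `I – W – W ⊔ J – J` resp. `I – W – W ⊓ J – J`.
-/

theorem finite_of_isResolving_of_dist_le {G : SimpleGraph V} {S : Finset V}
    (hS : IsResolving G ↑S) {d : ℕ} (hd : ∀ u v, G.dist u v ≤ d) : Finite V := by
  refine Finite.of_injective
    (fun u (w : S) => (⟨G.dist u w, Nat.lt_succ_of_le (hd u w)⟩ : Fin (d + 1)))
    fun u v huv => hS u v fun w hw => ?_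
  simpa using congrArg Fin.val (congrFun huv ⟨w, hw⟩)

namespace inclIdealGraph

variable {R : Type*} [CommRing R]

theorem dist_le_two_of_strict_upper_bound {I J : IdealVert R} {K : Ideal R} (hK : K ≠ ⊤)
    (hI : I.1 < K) (hJ : J.1 < K) : (inclIdealGraph R).dist I J ≤ 2 := by
  let Kv : IdealVert R := ⟨K, (bot_le.trans_lt hI).ne', hK⟩
  have hIK : (inclIdealGraph R).Adj I Kv := Or.inl hI
  have hKJ : (inclIdealGraph R).Adj Kv J := Or.inr hJ
  exact SimpleGraph.dist_le (hIK.toWalk.append hKJ.toWalk) |>.trans (by simp)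

theorem dist_le_two_of_strict_lower_bound {I J : IdealVert R} {K : Ideal R} (hK : K ≠ ⊥)
    (hI : K < I.1) (hJ : K < J.1) : (inclIdealGraph R).dist I J ≤ 2 := by
  let Kv : IdealVert R := ⟨K, hK, (hI.trans_le le_top).ne⟩
  have hIK : (inclIdealGraph R).Adj I Kv := Or.inr hI
  have hKJ : (inclIdealGraph R).Adj Kv J := Or.inl hJ
  exact SimpleGraph.dist_le (hIK.toWalk.append hKJ.toWalk) |>.trans (by simp)

theorem dist_le_three (hconn : (inclIdealGraph R).Connected) (I J : IdealVert R) :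
    (inclIdealGraph R).dist I J ≤ 3 := by
  by_cases hIJ : I = J
  · simp [hIJ]
  by_cases hadj : (inclIdealGraph R).Adj I J
  · simp [SimpleGraph.dist_eq_one_iff_adj.mpr hadj]
  have hnle : ¬ I.1 ≤ J.1 := fun h => hadj (.inl (h.lt_of_ne (hIJ ∘ Subtype.ext)))
  have hnge : ¬ J.1 ≤ I.1 := fun h => hadj (.inr (h.lt_of_ne (hIJ ∘ Subtype.ext ∘ Eq.symm)))
  by_cases hmeet : I.1 ⊓ J.1 = ⊥
  swap
  · exact (dist_le_two_of_strict_lower_bound hmeet (inf_lt_left.2 hnle)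
      (inf_lt_right.2 hnge)).trans (by norm_num)
  by_cases hjoin : I.1 ⊔ J.1 = ⊤
  swap
  · exact (dist_le_two_of_strict_upper_bound hjoin (left_lt_sup.2 hnge)
      (right_lt_sup.2 hnle)).trans (by norm_num)
  obtain ⟨W, hIW⟩ := (hconn.preconnected I J).nonempty_neighborSet_left hIJ
  refine (hIW.reachable.dist_triangle_left J).trans ?_
  rw [SimpleGraph.dist_eq_one_iff_adj.mpr hIW]
  suffices (inclIdealGraph R).dist W J ≤ 2 by omega
  rcases hIW with hIW | hWI
  · have hmeet' : W.1 ⊓ J.1 ≠ ⊥ := by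
      have := inf_lt_inf_of_lt_of_sup_le_sup (z := J.1) hIW (hjoin.symm ▸ le_top)
      rw [hmeet] at this
      exact this.ne'
    exact dist_le_two_of_strict_lower_bound hmeet' (inf_lt_left.2 fun h => hnle (hIW.le.trans h))
      (inf_lt_right.2 fun h => W.2.2 (top_le_iff.1 (hjoin.symm.trans_le (sup_le hIW.le h))))
  · have hjoin' : W.1 ⊔ J.1 ≠ ⊤ :=
      (sup_lt_sup_of_lt_of_inf_le_inf (z := J.1) hWI (hmeet.trans_le bot_le)).trans_eq hjoin |>.ne
    exact dist_le_two_of_strict_upper_bound hjoin' (left_lt_sup.2 fun h => hnge (h.trans hWI.le))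
      (right_lt_sup.2 fun h => W.2.1 (le_bot_iff.1 ((le_inf hWI.le h).trans_eq hmeet)))

end inclIdealGraph

theorem stmt0_general (R : Type*) [CommRing R]
    (hconn : (inclIdealGraph R).Connected)
    (hfin : ∃ S : Finset (IdealVert R), IsResolving (inclIdealGraph R) ↑S) :
    {I : Ideal R | I ≠ ⊥ ∧ I ≠ ⊤}.Finite := by
  obtain ⟨S, hS⟩ := hfin
  have : Finite (IdealVert R) :=
    finite_of_isResolving_of_dist_le hS (inclIdealGraph.dist_le_three hconn)
  exact Set.finite_coe_iff.mp this

/-- If the metric dimension of `In(R)` is finite (i.e. there is a finite resolving set),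
then `R` has only finitely many nontrivial ideals. -/
theorem stmt0 (R : Type*) [CommRing R] (hfield : ¬ IsField R)
    (hconn : (inclIdealGraph R).Connected)
    (hfin : ∃ S : Finset (IdealVert R), IsResolving (inclIdealGraph R) ↑S) :
    {I : Ideal R | I ≠ ⊥ ∧ I ≠ ⊤}.Finite :=
  stmt0_general R hconn hfin
end

section
/- The inclusion graph on nonempty proper subsets of a 4-element set has metric dimension 3; in particular the set of three singletons {1}, {2}, {3} is a metric basis. -/
open SimpleGraph Finset

variable {V : Type*}

/-!
In the inclusion graph on the nonempty proper subsets of an `n`-set with `3 ≤ n`, the distance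
between `A` and `B` is `0`, `1`, `2` or `3` according as `A = B`, `A` and `B` are comparable,
they are incomparable but not complementary (then `A ∩ B` or `A ∪ B` is a common neighbour),
or `B = Aᶜ` (no vertex is comparable with both, and `A ⊃ {a} ⊂ {a} ∪ Aᶜ ⊃ Aᶜ` is a path when
`2 ≤ |A|`). With this formula, the metric dimension for `n = 4` is a finite check: the distance
vectors to the three singletons separate the 14 vertices, and for any two vertices `w₁, w₂`
some two distinct vertices have the same distances to `w₁` and to `w₂`.
-/

lemma IsResolving.mono {G : SimpleGraph V} {S T : Set V} (hST : S ⊆ T) (hS : IsResolving G S) :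
    IsResolving G T :=
  fun u v h => hS u v fun w hw => h w (hST hw)

lemma metricDim_eq_card {G : SimpleGraph V} {S : Finset V} (hS : IsResolving G ↑S)
    (hmin : ∀ T : Finset V, #T < #S → ¬ IsResolving G ↑T) : metricDim G = #S :=
  IsLeast.csInf_eq ⟨⟨S, rfl, hS⟩, fun _ ⟨T, hT, hTres⟩ => hT ▸ not_lt.1 fun h => hmin T h hTres⟩

lemma Finset.exists_subset_pair_of_card_le_two {α : Type*} [DecidableEq α] [Nonempty α]
    {s : Finset α} (hs : #s ≤ 2) : ∃ a b, s ⊆ {a, b} := by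
  interval_cases h : #s
  · obtain ⟨a⟩ := ‹Nonempty α›
    exact ⟨a, a, by simp [card_eq_zero.1 h]⟩
  · obtain ⟨a, rfl⟩ := card_eq_one.1 h
    exact ⟨a, a, by simp⟩
  · obtain ⟨a, b, -, rfl⟩ := card_eq_two.1 h
    exact ⟨a, b, subset_rfl⟩

namespace SubVert

variable {n : ℕ}

instance : Fintype (SubVert n) :=
  inferInstanceAs (Fintype {A : Finset (Fin n) // A.Nonempty ∧ A ≠ univ})

instance : DecidableEq (SubVert n) :=
  inferInstanceAs (DecidableEq {A : Finset (Fin n) // A.Nonempty ∧ A ≠ univ})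

def single (i : Fin (n + 2)) : SubVert (n + 2) := ⟨{i}, singleton_nonempty i, singleton_ne_univ i⟩

instance : Nonempty (SubVert (n + 2)) := ⟨single 0⟩

lemma complVert_complVert (A : SubVert n) : complVert (complVert A) = A :=
  Subtype.ext (compl_compl A.1)

lemma ne_complVert (A : SubVert n) : A ≠ complVert A := fun h => by
  obtain ⟨a, ha⟩ := A.2.1
  have : a ∈ (complVert A).1 := h ▸ ha
  exact (mem_compl.1 this) ha

end SubVert

def inclDist {n : ℕ} (A B : Finset (Fin n)) : ℕ :=
  if A = B then 0 else if A ⊆ B ∨ B ⊆ A then 1 else if B = Aᶜ then 3 else 2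

namespace inclGraph

open SubVert

variable {n : ℕ} {A B : SubVert n}

lemma adj_iff : (inclGraph n).Adj A B ↔ A ≠ B ∧ (A.1 ⊆ B.1 ∨ B.1 ⊆ A.1) := by
  constructor
  · rintro (h | h)
    · exact ⟨fun e => h.ne (congrArg Subtype.val e), .inl h.subset⟩
    · exact ⟨fun e => h.ne (congrArg Subtype.val e).symm, .inr h.subset⟩
  · rintro ⟨hne, h | h⟩
    · exact .inl (h.ssubset_of_ne fun e => hne (Subtype.ext e))
    · exact .inr (h.ssubset_of_ne fun e => hne (Subtype.ext e).symm)

lemma not_adj_complVert : ¬ (inclGraph n).Adj A (complVert A) := by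
  rintro (h | h)
  · exact A.2.1.ne_empty (le_compl_self.1 h.le)
  · exact A.2.2 (compl_le_self.1 h.le)

lemma commonNeighbors_complVert : (inclGraph n).commonNeighbors A (complVert A) = ∅ := by
  refine Set.eq_empty_of_forall_notMem fun C hC => ?_
  obtain ⟨hAC, hCA⟩ := (mem_commonNeighbors _).1 hC
  rcases hAC with h₁ | h₁ <;> rcases hCA with h₂ | h₂
  · exact C.2.2 (top_le_iff.1 (sup_compl_eq_top (x := A.1) ▸ sup_le h₁.le h₂.le))
  · exact A.2.1.ne_empty (le_compl_self.1 (h₁.le.trans h₂.le))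
  · exact A.2.2 (compl_le_self.1 (h₂.le.trans h₁.le))
  · exact C.2.1.ne_empty (le_bot_iff.1 (inf_compl_eq_bot (a := A.1) ▸ le_inf h₁.le h₂.le))

lemma commonNeighbors_nonempty (hAB : ¬(A.1 ⊆ B.1 ∨ B.1 ⊆ A.1)) (hc : B.1 ≠ A.1ᶜ) :
    ((inclGraph n).commonNeighbors A B).Nonempty := by
  by_cases hmeet : (A.1 ∩ B.1).Nonempty
  · refine ⟨⟨A.1 ∩ B.1, hmeet, ne_top_of_le_ne_top A.2.2 inter_subset_left⟩, ?_, ?_⟩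
    · exact .inr (inter_subset_left.ssubset_of_ne fun e => hAB (.inl (inter_eq_left.1 e)))
    · exact .inr (inter_subset_right.ssubset_of_ne fun e => hAB (.inr (inter_eq_right.1 e)))
  · have hdisj : A.1 ∩ B.1 = ∅ := not_nonempty_iff_eq_empty.1 hmeet
    refine ⟨⟨A.1 ∪ B.1, A.2.1.mono subset_union_left,
      fun h => hc (IsCompl.of_eq hdisj h).compl_eq.symm⟩, ?_, ?_⟩
    · exact .inl (subset_union_left.ssubset_of_ne fun e => hAB (.inr (union_eq_left.1 e.symm)))
    · exact .inl (subset_union_right.ssubset_of_ne fun e => hAB (.inl (union_eq_right.1 e.symm)))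

lemma exists_walk_complVert_of_two_le_card (hcard : 2 ≤ #A.1) :
    ∃ p : (inclGraph n).Walk A (complVert A), p.length = 3 := by
  obtain ⟨a, ha⟩ := A.2.1
  have hA : ¬ A.1 ⊆ {a} := fun h => by simpa using (card_le_card h).trans' hcard
  let C : SubVert n := ⟨{a}, singleton_nonempty a, fun h => hA (by rw [h]; exact subset_univ _)⟩
  let D : SubVert n := ⟨insert a A.1ᶜ, insert_nonempty _ _, fun h => hA fun x hx => by
    have hx' : x ∈ insert a A.1ᶜ := by rw [h]; exact mem_univ x
    simpa [hx] using hx'⟩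
  obtain ⟨b, hb⟩ := (complVert A).2.1
  have hAC : (inclGraph n).Adj A C :=
    .inr ((singleton_subset_iff.2 ha).ssubset_of_ne fun e => hA e.symm.subset)
  have hCD : (inclGraph n).Adj C D := .inl <|
    (singleton_subset_iff.2 (mem_insert_self _ _)).ssubset_of_ne fun e => by
      have : b ∈ ({a} : Finset (Fin n)) := e ▸ mem_insert_of_mem hb
      rw [mem_singleton.1 this] at hb
      exact mem_compl.1 hb ha
  have hDAc : (inclGraph n).Adj D (complVert A) :=
    .inr (ssubset_insert fun h => mem_compl.1 h ha)
  exact ⟨.cons hAC (.cons hCD (.cons hDAc .nil)), rfl⟩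

lemma exists_walk_complVert (hn : 3 ≤ n) (A : SubVert n) :
    ∃ p : (inclGraph n).Walk A (complVert A), p.length = 3 := by
  by_cases hA : 2 ≤ #A.1
  · exact exists_walk_complVert_of_two_le_card hA
  · have hAc : 2 ≤ #(complVert A).1 := by
      rw [complVert, card_compl, Fintype.card_fin]; omega
    obtain ⟨p, hp⟩ := exists_walk_complVert_of_two_le_card hAc
    exact ⟨p.reverse.copy (complVert_complVert A) rfl, by simpa using hp⟩

lemma dist_complVert (hn : 3 ≤ n) (A : SubVert n) : (inclGraph n).dist A (complVert A) = 3 := by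
  obtain ⟨p, hp⟩ := exists_walk_complVert hn A
  have hlt : 2 < (inclGraph n).edist A (complVert A) :=
    two_lt_edist_iff.2 ⟨ne_complVert A, not_adj_complVert, commonNeighbors_complVert⟩
  rw [← Reachable.coe_dist_eq_edist ⟨p⟩] at hlt
  have := hp ▸ dist_le p
  norm_cast at hlt
  omega

lemma dist_eq_two (hAB : ¬(A.1 ⊆ B.1 ∨ B.1 ⊆ A.1)) (hc : B.1 ≠ A.1ᶜ) :
    (inclGraph n).dist A B = 2 := by
  have hne : A ≠ B := by rintro rfl; exact hAB (.inl subset_rfl)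
  have hnadj : ¬ (inclGraph n).Adj A B := fun h => hAB (adj_iff.1 h).2
  rw [SimpleGraph.dist, edist_eq_two_iff.2 ⟨hne, hnadj, commonNeighbors_nonempty hAB hc⟩]
  rfl

theorem dist_eq_inclDist (hn : 3 ≤ n) (A B : SubVert n) :
    (inclGraph n).dist A B = inclDist A.1 B.1 := by
  unfold inclDist
  split_ifs with hAB hcomp hcompl
  · rw [Subtype.ext hAB, dist_self]
  · exact dist_eq_one_iff_adj.2 (adj_iff.2 ⟨fun h => hAB (congrArg Subtype.val h), hcomp⟩)
  · obtain rfl : B = complVert A := Subtype.ext hcompl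
    exact dist_complVert hn A
  · exact dist_eq_two hcomp hcompl

lemma eq_of_inclDist_singles_eq : ∀ A B : SubVert 4,
    inclDist A.1 {0} = inclDist B.1 {0} → inclDist A.1 {1} = inclDist B.1 {1} →
      inclDist A.1 {2} = inclDist B.1 {2} → A = B := by
  decide

lemma exists_ne_inclDist_eq_inclDist : ∀ w₁ w₂ : SubVert 4, ∃ A B : SubVert 4, A ≠ B ∧
    inclDist A.1 w₁.1 = inclDist B.1 w₁.1 ∧ inclDist A.1 w₂.1 = inclDist B.1 w₂.1 := by
  decide

lemma isResolving_singles :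
    IsResolving (inclGraph 4) ↑({single 0, single 1, single 2} : Finset (SubVert 4)) := by
  intro A B h
  simp only [coe_insert, coe_singleton, Set.mem_insert_iff, Set.mem_singleton_iff,
    forall_eq_or_imp, forall_eq, dist_eq_inclDist (by norm_num : 3 ≤ 4)] at h
  exact eq_of_inclDist_singles_eq A B h.1 h.2.1 h.2.2

lemma not_isResolving_of_card_lt_three (T : Finset (SubVert 4)) (hT : #T < 3) :
    ¬ IsResolving (inclGraph 4) ↑T := by
  obtain ⟨w₁, w₂, hsub⟩ := exists_subset_pair_of_card_le_two (Nat.le_of_lt_succ hT)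
  obtain ⟨A, B, hAB, h₁, h₂⟩ := exists_ne_inclDist_eq_inclDist w₁ w₂
  refine fun hres => hAB (hres.mono (coe_subset.2 hsub) A B ?_)
  simp only [coe_insert, coe_singleton, Set.mem_insert_iff, Set.mem_singleton_iff,
    forall_eq_or_imp, forall_eq, dist_eq_inclDist (by norm_num : 3 ≤ 4)]
  exact ⟨h₁, h₂⟩

end inclGraph

theorem stmt4 :
    metricDim (inclGraph 4) = 3 ∧
      IsResolving (inclGraph 4)
        {A : SubVert 4 | A.1 = {0} ∨ A.1 = {1} ∨ A.1 = {2}} := by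
  have hS := inclGraph.isResolving_singles
  refine ⟨?_, hS.mono ?_⟩
  · rw [metricDim_eq_card hS inclGraph.not_isResolving_of_card_lt_three]
    decide
  · intro A hA
    simp only [coe_insert, coe_singleton, Set.mem_insert_iff, Set.mem_singleton_iff] at hA
    rcases hA with rfl | rfl | rfl
    exacts [.inl rfl, .inr (.inl rfl), .inr (.inr rfl)]
end
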